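/- arXiv:1410.3656 — 6 statements merged into one kernel-verified Lean document; each statement's English description precedes it below -/
import Mathlib

section
/- Let G be a real symmetric positive definite n×n matrix, let λ_min be its smallest eigenvalue, and let G_min be its smallest diagonal entry. Then any nonzero integer vector a minimizing aᵀGa over all nonzero integer vectors satisfies ‖a‖ ≤ √(G_min/λ_min). -/
open Matrix BigOperators

/-
Shifting a Hermitian matrix by its smallest eigenvalue λ leaves it positive semidefinite, so the
quadratic form of G is at least λ‖x‖². Testing the minimality of a against the unit vectors bounds
its value aᵀGa by every diagonal entry, hence by G_min, and so λ‖a‖² ≤ aᵀGa ≤ G_min.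
-/

namespace Matrix.IsHermitian

open scoped ComplexOrder

variable {𝕜 n : Type*} [RCLike 𝕜] [Fintype n] [DecidableEq n]

lemma posSemidef_sub_smul_one {A : Matrix n n 𝕜} (hA : A.IsHermitian) {c : ℝ}
    (hc : ∀ i, c ≤ hA.eigenvalues i) : (A - (c : 𝕜) • 1).PosSemidef := by
  set U : Matrix n n 𝕜 := (hA.eigenvectorUnitary : Matrix n n 𝕜)
  have hdiag : A - (c : 𝕜) • 1 = U * diagonal (fun i ↦ ((hA.eigenvalues i - c : ℝ) : 𝕜)) * Uᴴ := by
    conv_lhs => rw [hA.spectral_theorem]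
    simp only [Unitary.conjStarAlgAut_apply, U, star_eq_conjTranspose, RCLike.ofReal_sub,
      ← diagonal_sub, mul_sub, sub_mul, Function.comp_def]
    congr 1
    rw [← smul_one_eq_diagonal, mul_smul_comm, mul_one, smul_mul_assoc, ← star_eq_conjTranspose,
      Unitary.mul_star_self_of_mem hA.eigenvectorUnitary.2]
  rw [hdiag]
  exact (posSemidef_diagonal_iff.2 fun i ↦ by simpa using hc i).mul_mul_conjTranspose_same U

lemma mul_dotProduct_self_le {A : Matrix n n ℝ} (hA : A.IsHermitian) {c : ℝ}
    (hc : ∀ i, c ≤ hA.eigenvalues i) (x : n → ℝ) : c * (x ⬝ᵥ x) ≤ x ⬝ᵥ A *ᵥ x := by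
  have h := (hA.posSemidef_sub_smul_one hc).dotProduct_mulVec_nonneg x
  simp only [star_trivial, RCLike.ofReal_real_eq_id, id, sub_mulVec, smul_mulVec, one_mulVec,
    dotProduct_sub, dotProduct_smul, smul_eq_mul] at h
  linarith

end Matrix.IsHermitian

theorem stmt0_general {n : ℕ} [NeZero n] (G : Matrix (Fin n) (Fin n) ℝ) (hG : G.PosDef)
    (lam : ℝ) (hlam : lam = ⨅ i, hG.1.eigenvalues i)
    (Gmin : ℝ) (hGmin : Gmin = ⨅ i, G i i)
    (a : Fin n → ℤ)
    (hmin : ∀ b : Fin n → ℤ, b ≠ 0 →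
      (fun i => (a i : ℝ)) ⬝ᵥ G.mulVec (fun i => (a i : ℝ)) ≤
      (fun i => (b i : ℝ)) ⬝ᵥ G.mulVec (fun i => (b i : ℝ))) :
    ∑ i, ((a i : ℝ)) ^ 2 ≤ Gmin / lam := by
  set x : Fin n → ℝ := fun i => (a i : ℝ)
  have hlam_le : ∀ i, lam ≤ hG.1.eigenvalues i := hlam ▸ ciInf_le (Finite.bddBelow_range _)
  have hlam_pos : 0 < lam := by
    obtain ⟨i, hi⟩ := exists_eq_ciInf_of_finite (f := hG.1.eigenvalues)
    exact hlam ▸ hi ▸ hG.eigenvalues_pos i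
  have hx_le_diag (j : Fin n) : x ⬝ᵥ G *ᵥ x ≤ G j j := by
    have hcast : (fun i ↦ ((Pi.single j 1 : Fin n → ℤ) i : ℝ)) = Pi.single j 1 := by
      ext i; simp [Pi.single_apply]
    simpa [hcast] using hmin (Pi.single j 1) (Pi.single_ne_zero_iff.2 one_ne_zero)
  rw [le_div_iff₀ hlam_pos, mul_comm]
  calc lam * ∑ i, x i ^ 2 = lam * (x ⬝ᵥ x) := by simp only [dotProduct, sq]
    _ ≤ x ⬝ᵥ G *ᵥ x := hG.1.mul_dotProduct_self_le hlam_le x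
    _ ≤ Gmin := hGmin ▸ le_ciInf hx_le_diag

theorem stmt0 {n : ℕ} [NeZero n] (G : Matrix (Fin n) (Fin n) ℝ) (hG : G.PosDef)
    (lam : ℝ) (hlam : lam = ⨅ i, hG.1.eigenvalues i)
    (Gmin : ℝ) (hGmin : Gmin = ⨅ i, G i i)
    (a : Fin n → ℤ) (ha : a ≠ 0)
    (hmin : ∀ b : Fin n → ℤ, b ≠ 0 →
      (fun i => (a i : ℝ)) ⬝ᵥ G.mulVec (fun i => (a i : ℝ)) ≤
      (fun i => (b i : ℝ)) ⬝ᵥ G.mulVec (fun i => (b i : ℝ))) :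
    ∑ i, ((a i : ℝ)) ^ 2 ≤ Gmin / lam :=
  stmt0_general G hG lam hlam Gmin hGmin a hmin
end

section
/- Let h ∈ ℝⁿ, P > 0, and G = (1 + P‖h‖²)·I − P·h·hᵀ. Any nonzero integer vector a* minimizing aᵀGa over nonzero integer vectors satisfies ‖a*‖² ≤ 1 + P‖h‖². -/
open Matrix BigOperators

theorem stmt5 {n : ℕ} (h : Fin n → ℝ) (P : ℝ) (hP : 0 < P)
    (G : Matrix (Fin n) (Fin n) ℝ)
    (hGdef : ∀ i j, G i j =
      (1 + P * ∑ l, (h l) ^ 2) * (if i = j then 1 else 0) - P * h i * h j)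
    (a : Fin n → ℤ) (ha : a ≠ 0)
    (hmin : ∀ b : Fin n → ℤ, b ≠ 0 →
      (fun i => (a i : ℝ)) ⬝ᵥ G.mulVec (fun i => (a i : ℝ)) ≤
      (fun i => (b i : ℝ)) ⬝ᵥ G.mulVec (fun i => (b i : ℝ))) :
    ∑ i, ((a i : ℝ)) ^ 2 ≤ 1 + P * ∑ i, (h i) ^ 2 := by
  set c : ℝ := P * ∑ l, (h l) ^ 2 with hc
  have key : ∀ v : Fin n → ℝ, v ⬝ᵥ G.mulVec v
      = (1 + c) * (∑ i, (v i) ^ 2) - P * (∑ i, h i * v i) ^ 2 := by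
    intro v
    simp only [dotProduct, mulVec, dotProduct, hGdef]
    have : ∀ i, ∑ j, ((1 + c) * (if i = j then 1 else 0) - P * h i * h j) * v j
        = (1 + c) * v i - P * h i * ∑ j, h j * v j := by
      intro i
      simp only [sub_mul]
      rw [Finset.sum_sub_distrib, Finset.mul_sum]
      congr 1
      · simp [mul_ite, Finset.sum_ite_eq]
      · apply Finset.sum_congr rfl; intro j _; ring
    simp only [this, mul_sub]
    rw [Finset.sum_sub_distrib]
    congr 1
    · rw [Finset.mul_sum]; apply Finset.sum_congr rfl; intro i _; ring
    · have : ∑ x, v x * (P * h x * ∑ j, h j * v j)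
          = (∑ x, h x * v x) * (P * ∑ j, h j * v j) := by
        rw [Finset.sum_mul]; apply Finset.sum_congr rfl; intro i _; ring
      rw [this]; ring
  obtain ⟨i₀, hi₀⟩ := Function.ne_iff.mp ha
  set b : Fin n → ℤ := Pi.single i₀ 1 with hb
  have hbne : b ≠ 0 := by
    intro h0
    have := congrFun h0 i₀
    simp [hb] at this
  have hbv : (fun i => ((b i : ℝ))) = Pi.single i₀ 1 := by
    funext i
    by_cases hi : i = i₀ <;> simp [hb, hi, Pi.single_apply]
  have hbG : (fun i => (b i : ℝ)) ⬝ᵥ G.mulVec (fun i => (b i : ℝ)) ≤ 1 + c := by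
    rw [key]
    have h1 : ∑ i, ((b i : ℝ)) ^ 2 = 1 := by
      simp [hb, Pi.single_apply, apply_ite (Int.cast : ℤ → ℝ), ite_pow,
        Finset.sum_ite_eq']
    rw [h1]
    nlinarith [sq_nonneg (∑ i, h i * (b i : ℝ))]
  have hCS : (∑ i, h i * (a i : ℝ)) ^ 2 ≤ (∑ i, (h i) ^ 2) * ∑ i, ((a i : ℝ)) ^ 2 :=
    Finset.sum_mul_sq_le_sq_mul_sq Finset.univ h (fun i => (a i : ℝ))
  have haG : ∑ i, ((a i : ℝ)) ^ 2 ≤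
      (fun i => (a i : ℝ)) ⬝ᵥ G.mulVec (fun i => (a i : ℝ)) := by
    rw [key]
    have h2 : P * (∑ i, h i * (a i : ℝ)) ^ 2 ≤ c * ∑ i, ((a i : ℝ)) ^ 2 := by
      rw [hc]; nlinarith [hCS]
    nlinarith [h2]
  have := hmin b hbne
  linarith
end

section
/- Let G be symmetric positive definite and let a* minimize f(a) = aᵀGa over nonzero integer vectors. Fix j, and suppose a* has at least one nonzero coordinate other than j. Then |a*_j − r_j| ≤ 1/2, where r_j = (Σ_{i≠j} (−G_{ij}) a*_i)/G_{jj} is the real minimizer of f in the j-th coordinate keeping the others fixed. -/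
/-!
Perturbing the minimiser by `±eⱼ` keeps it a nonzero integer vector, as it has a nonzero
coordinate other than `j`. Along the line `a* + t eⱼ` the form is the quadratic
`f(a*) + 2 t Gⱼⱼ (a*ⱼ - rⱼ) + t² Gⱼⱼ`, so `f(a*) ≤ f(a* ± eⱼ)` gives `1 ± 2 (a*ⱼ - rⱼ) ≥ 0`.
-/

open Matrix

namespace Matrix

variable {ι R : Type*} [Fintype ι]

theorem IsSymm.dotProduct_mulVec_comm [CommSemiring R] {G : Matrix ι ι R} (hG : G.IsSymm)
    (u v : ι → R) : u ⬝ᵥ G *ᵥ v = v ⬝ᵥ G *ᵥ u := by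
  rw [← vecMul_transpose, hG.eq, dotProduct_comm, ← dotProduct_mulVec]

theorem IsSymm.dotProduct_mulVec_add_smul_single [DecidableEq ι] [CommRing R]
    {G : Matrix ι ι R} (hG : G.IsSymm) (u : ι → R) (j : ι) (c : R) :
    (u + c • Pi.single j 1) ⬝ᵥ G *ᵥ (u + c • Pi.single j 1) =
      u ⬝ᵥ G *ᵥ u + 2 * c * (G *ᵥ u) j + c ^ 2 * G j j := by
  have hcross : u ⬝ᵥ G.col j = (G *ᵥ u) j := by
    rw [← mulVec_single_one, hG.dotProduct_mulVec_comm, single_one_dotProduct]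
  simp only [mulVec_add, mulVec_smul, dotProduct_add, add_dotProduct, dotProduct_smul,
    smul_dotProduct, hcross, single_one_dotProduct, mulVec_single_one, col_apply, smul_eq_mul]
  ring

/-- The value `rⱼ` of the `j`-th coordinate minimising `x ↦ xᵀ G x` when the other
coordinates are those of `u`. -/
noncomputable def coordMinimizer [DecidableEq ι] (G : Matrix ι ι ℝ) (u : ι → ℝ) (j : ι) : ℝ :=
  -(∑ i ∈ Finset.univ.erase j, G j i * u i) / G j j

theorem mulVec_apply_eq_mul_sub_coordMinimizer [DecidableEq ι] {G : Matrix ι ι ℝ} {j : ι}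
    (hjj : G j j ≠ 0) (u : ι → ℝ) :
    (G *ᵥ u) j = G j j * (u j - G.coordMinimizer u j) := by
  have hsplit : (G *ᵥ u) j = G j j * u j + ∑ i ∈ Finset.univ.erase j, G j i * u i :=
    (Finset.add_sum_erase _ (fun i => G j i * u i) (Finset.mem_univ j)).symm
  rw [hsplit, coordMinimizer]
  field_simp
  ring

theorem IsSymm.abs_sub_coordMinimizer_le_half [DecidableEq ι] {G : Matrix ι ι ℝ}
    (hG : G.IsSymm) {j : ι} (hjj : 0 < G j j) (u : ι → ℝ)
    (hplus : u ⬝ᵥ G *ᵥ u ≤ (u + (1 : ℝ) • Pi.single j 1) ⬝ᵥ G *ᵥ (u + (1 : ℝ) • Pi.single j 1))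
    (hminus : u ⬝ᵥ G *ᵥ u ≤
      (u + (-1 : ℝ) • Pi.single j 1) ⬝ᵥ G *ᵥ (u + (-1 : ℝ) • Pi.single j 1)) :
    |u j - G.coordMinimizer u j| ≤ 1 / 2 := by
  rw [hG.dotProduct_mulVec_add_smul_single, mulVec_apply_eq_mul_sub_coordMinimizer hjj.ne']
    at hplus hminus
  rw [abs_le]
  constructor <;> nlinarith

end Matrix

theorem stmt8_general {n : ℕ} (G : Matrix (Fin n) (Fin n) ℝ) (hG : G.PosDef)
    (a : Fin n → ℤ)
    (hmin : ∀ b : Fin n → ℤ, b ≠ 0 →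
      (fun i => (a i : ℝ)) ⬝ᵥ G.mulVec (fun i => (a i : ℝ)) ≤
      (fun i => (b i : ℝ)) ⬝ᵥ G.mulVec (fun i => (b i : ℝ)))
    (j : Fin n) (hne : ∃ i, i ≠ j ∧ a i ≠ 0)
    (r : ℝ)
    (hr : r = -(∑ i ∈ Finset.univ.erase j, G j i * (a i : ℝ)) / G j j) :
    |(a j : ℝ) - r| ≤ 1 / 2 := by
  obtain ⟨i₀, hi₀j, hi₀⟩ := hne
  have hshift : ∀ t : ℤ, (fun i => (a i : ℝ)) ⬝ᵥ G *ᵥ (fun i => (a i : ℝ)) ≤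
      ((fun i => (a i : ℝ)) + (t : ℝ) • Pi.single j 1) ⬝ᵥ
        G *ᵥ ((fun i => (a i : ℝ)) + (t : ℝ) • Pi.single j 1) := by
    intro t
    have hshift_ne : a + t • Pi.single j 1 ≠ 0 := fun h => hi₀ <| by
      simpa [Pi.single_eq_of_ne hi₀j] using congrFun h i₀
    have hcast : (fun i => ((a + t • Pi.single j 1 : Fin n → ℤ) i : ℝ)) =
        (fun i => (a i : ℝ)) + (t : ℝ) • Pi.single j 1 := by
      ext i
      by_cases hij : i = j <;> simp [hij]
    rw [← hcast]
    exact hmin _ hshift_ne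
  subst hr
  exact (isHermitian_iff_isSymm.mp hG.isHermitian).abs_sub_coordMinimizer_le_half hG.diag_pos _
    (by exact_mod_cast hshift 1) (by exact_mod_cast hshift (-1))

theorem stmt8 {n : ℕ} (G : Matrix (Fin n) (Fin n) ℝ) (hG : G.PosDef)
    (a : Fin n → ℤ) (ha : a ≠ 0)
    (hmin : ∀ b : Fin n → ℤ, b ≠ 0 →
      (fun i => (a i : ℝ)) ⬝ᵥ G.mulVec (fun i => (a i : ℝ)) ≤
      (fun i => (b i : ℝ)) ⬝ᵥ G.mulVec (fun i => (b i : ℝ)))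
    (j : Fin n) (hne : ∃ i, i ≠ j ∧ a i ≠ 0)
    (r : ℝ)
    (hr : r = -(∑ i ∈ Finset.univ.erase j, G j i * (a i : ℝ)) / G j j) :
    |(a j : ℝ) - r| ≤ 1 / 2 :=
  stmt8_general G hG a hmin j hne r hr
end

section
/- (Theorem 1) Let h ∈ ℝⁿ, P > 0, G = (1 + P‖h‖²)·I − P·h·hᵀ, and let a* ∈ ℤⁿ \ {0} minimize aᵀGa. Then either a* is a signed standard unit vector, or there exists x ∈ ℝ such that a* − (1/2)𝟙 < h·x < a* + (1/2)𝟙 componentwise, hence a*_i = round(h_i·x) for all i. -/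
/-!
With `c = 1 + P‖h‖²` the form is `vᵀGv = c‖v‖² - P (h ⬝ᵥ v)²`. If `a` is not a signed unit
vector, then `a + e_j` and `a - e_j` are nonzero competitors, and expanding the form shows that
minimality against both gives `2 |a_j - h_j x| + P h_j² / c ≤ 1` for `x = P (h ⬝ᵥ a) / c`.
This is strict when `h_j ≠ 0`; when `h_j = 0` it forces the integer `a_j` to vanish.
-/

open Matrix

section
variable {ι R : Type*} [DecidableEq ι]

theorem exists_signed_single_of_add_single_eq_zero {a : ι → ℤ} {j : ι} {t : ℤ}
    (ht : t = 1 ∨ t = -1) (h0 : a + Pi.single j t = 0) :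
    ∃ j, (∀ i, i ≠ j → a i = 0) ∧ (a j = 1 ∨ a j = -1) := by
  rw [add_eq_zero_iff_eq_neg, ← Pi.single_neg] at h0
  subst h0
  exact ⟨j, fun i hij => Pi.single_eq_of_ne hij _, by rcases ht with rfl | rfl <;> simp⟩

theorem intCast_add_single [AddGroupWithOne R] (a : ι → ℤ) (j : ι) (t : ℤ) :
    (fun i => ((a + Pi.single j t : ι → ℤ) i : R)) =
      (fun i => (a i : R)) + Pi.single j (t : R) := by
  ext i
  rcases eq_or_ne i j with rfl | hij <;> simp [Pi.single_eq_of_ne, *]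

variable [Fintype ι] [CommRing R] {c P : R} {h : ι → R} {G : Matrix ι ι R}

theorem dotProduct_mulVec_eq_of_eq_smul_sub_vecMulVec
    (hG : ∀ i j, G i j = c * (if i = j then 1 else 0) - P * h i * h j) (v : ι → R) :
    v ⬝ᵥ G *ᵥ v = c * (v ⬝ᵥ v) - P * (h ⬝ᵥ v) ^ 2 := by
  obtain rfl : G = c • 1 - P • vecMulVec h h := by
    ext i j
    simp [hG, one_apply, vecMulVec_apply, mul_assoc]
  simp only [sub_mulVec, smul_mulVec, one_mulVec, vecMulVec_mulVec, dotProduct_sub,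
    dotProduct_smul, smul_eq_mul, op_smul_eq_mul, dotProduct_comm v h]
  ring

theorem dotProduct_mulVec_add_single
    (hG : ∀ i j, G i j = c * (if i = j then 1 else 0) - P * h i * h j)
    (v : ι → R) (j : ι) (t : R) :
    (v + Pi.single j t) ⬝ᵥ G *ᵥ (v + Pi.single j t) =
      v ⬝ᵥ G *ᵥ v + t * (c * (2 * v j + t) - P * h j * (2 * (h ⬝ᵥ v) + t * h j)) := by
  simp only [dotProduct_mulVec_eq_of_eq_smul_sub_vecMulVec hG, dotProduct_add, add_dotProduct,
    dotProduct_single, single_dotProduct, Pi.add_apply, Pi.single_eq_same]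
  ring

end

section
variable {ι : Type*} [Fintype ι] [DecidableEq ι] {c P : ℝ} {h : ι → ℝ} {G : Matrix ι ι ℝ}

theorem two_mul_abs_sub_add_le_one_of_le_add_single
    (hG : ∀ i j, G i j = c * (if i = j then 1 else 0) - P * h i * h j) (hc : 0 < c)
    {v : ι → ℝ} {j : ι}
    (hplus : v ⬝ᵥ G *ᵥ v ≤ (v + Pi.single j 1) ⬝ᵥ G *ᵥ (v + Pi.single j 1))
    (hminus : v ⬝ᵥ G *ᵥ v ≤ (v + Pi.single j (-1)) ⬝ᵥ G *ᵥ (v + Pi.single j (-1))) :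
    2 * |v j - h j * (P * (h ⬝ᵥ v) / c)| + P * h j ^ 2 / c ≤ 1 := by
  rw [dotProduct_mulVec_add_single hG] at hplus hminus
  have hx : c * (P * (h ⬝ᵥ v) / c) = P * (h ⬝ᵥ v) := mul_div_cancel₀ _ hc.ne'
  have hw : c * (P * h j ^ 2 / c) = P * h j ^ 2 := mul_div_cancel₀ _ hc.ne'
  generalize P * (h ⬝ᵥ v) / c = x at hx ⊢
  generalize P * h j ^ 2 / c = w at hw ⊢
  have hplus' : 0 ≤ c * (1 + 2 * (v j - h j * x) - w) := by
    linear_combination hplus + 2 * h j * hx + hw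
  have hminus' : 0 ≤ c * (1 - 2 * (v j - h j * x) - w) := by
    linear_combination hminus - 2 * h j * hx + hw
  have := nonneg_of_mul_nonneg_right hplus' hc
  have := nonneg_of_mul_nonneg_right hminus' hc
  have : |v j - h j * x| ≤ (1 - w) / 2 := abs_le.2 ⟨by linarith, by linarith⟩
  linarith

theorem abs_intCast_sub_lt_half_of_le_add_single
    (hG : ∀ i j, G i j = c * (if i = j then 1 else 0) - P * h i * h j) (hc : 0 < c) (hP : 0 < P)
    {a : ι → ℤ} {j : ι}
    (hplus : (fun i => (a i : ℝ)) ⬝ᵥ G *ᵥ (fun i => (a i : ℝ)) ≤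
      ((fun i => (a i : ℝ)) + Pi.single j 1) ⬝ᵥ G *ᵥ ((fun i => (a i : ℝ)) + Pi.single j 1))
    (hminus : (fun i => (a i : ℝ)) ⬝ᵥ G *ᵥ (fun i => (a i : ℝ)) ≤
      ((fun i => (a i : ℝ)) + Pi.single j (-1)) ⬝ᵥ G *ᵥ
        ((fun i => (a i : ℝ)) + Pi.single j (-1))) :
    |(a j : ℝ) - h j * (P * (h ⬝ᵥ fun i => (a i : ℝ)) / c)| < 1 / 2 := by
  have hle := two_mul_abs_sub_add_le_one_of_le_add_single hG hc hplus hminus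
  rcases eq_or_ne (h j) 0 with h0 | h0
  · simp only [h0, zero_mul, sub_zero, ne_eq, OfNat.ofNat_ne_zero, not_false_eq_true,
      zero_pow, mul_zero, zero_div, add_zero] at hle ⊢
    have : 2 * |a j| ≤ 1 := by exact_mod_cast hle
    have : a j = 0 := abs_nonpos_iff.1 (by omega)
    simp [this]
  · have : 0 < P * h j ^ 2 / c := by positivity
    linarith

end

theorem stmt10_general {n : ℕ} (h : Fin n → ℝ) (P : ℝ) (hP : 0 < P)
    (G : Matrix (Fin n) (Fin n) ℝ)
    (hGdef : ∀ i j, G i j =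
      (1 + P * ∑ l, (h l) ^ 2) * (if i = j then 1 else 0) - P * h i * h j)
    (a : Fin n → ℤ)
    (hmin : ∀ b : Fin n → ℤ, b ≠ 0 →
      (fun i => (a i : ℝ)) ⬝ᵥ G.mulVec (fun i => (a i : ℝ)) ≤
      (fun i => (b i : ℝ)) ⬝ᵥ G.mulVec (fun i => (b i : ℝ))) :
    (∃ j, (∀ i, i ≠ j → a i = 0) ∧ (a j = 1 ∨ a j = -1)) ∨
    (∃ x : ℝ, ∀ i,
      ((a i : ℝ) - 1 / 2 < h i * x ∧ h i * x < (a i : ℝ) + 1 / 2) ∧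
      a i = round (h i * x)) := by
  by_cases hunit : ∃ j, (∀ i, i ≠ j → a i = 0) ∧ (a j = 1 ∨ a j = -1)
  · exact Or.inl hunit
  have hc : 0 < 1 + P * ∑ l, h l ^ 2 := by positivity
  have hstep : ∀ j (t : ℤ), (t = 1 ∨ t = -1) →
      (fun i => (a i : ℝ)) ⬝ᵥ G *ᵥ (fun i => (a i : ℝ)) ≤
        ((fun i => (a i : ℝ)) + Pi.single j (t : ℝ)) ⬝ᵥ G *ᵥ
          ((fun i => (a i : ℝ)) + Pi.single j (t : ℝ)) := fun j t ht => by
    rw [← intCast_add_single]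
    exact hmin _ fun h0 => hunit (exists_signed_single_of_add_single_eq_zero ht h0)
  refine Or.inr ⟨P * (h ⬝ᵥ fun i => (a i : ℝ)) / (1 + P * ∑ l, h l ^ 2), fun j => ?_⟩
  have hlt := abs_sub_lt_iff.1 <| abs_intCast_sub_lt_half_of_le_add_single hGdef hc hP
    (by simpa using hstep j 1 (.inl rfl)) (by simpa using hstep j (-1) (.inr rfl))
  exact ⟨⟨by linarith, by linarith⟩, (round_eq_iff.2 ⟨by linarith, by linarith⟩).symm⟩

theorem stmt10 {n : ℕ} (h : Fin n → ℝ) (P : ℝ) (hP : 0 < P)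
    (G : Matrix (Fin n) (Fin n) ℝ)
    (hGdef : ∀ i j, G i j =
      (1 + P * ∑ l, (h l) ^ 2) * (if i = j then 1 else 0) - P * h i * h j)
    (a : Fin n → ℤ) (ha : a ≠ 0)
    (hmin : ∀ b : Fin n → ℤ, b ≠ 0 →
      (fun i => (a i : ℝ)) ⬝ᵥ G.mulVec (fun i => (a i : ℝ)) ≤
      (fun i => (b i : ℝ)) ⬝ᵥ G.mulVec (fun i => (b i : ℝ))) :
    (∃ j, (∀ i, i ≠ j → a i = 0) ∧ (a j = 1 ∨ a j = -1)) ∨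
    (∃ x : ℝ, ∀ i,
      ((a i : ℝ) - 1 / 2 < h i * x ∧ h i * x < (a i : ℝ) + 1 / 2) ∧
      a i = round (h i * x)) :=
  stmt10_general h P hP G hGdef a hmin
end

section
/- With G = W R Wᵀ as in the MIMO Compute-and-Forward setup, the smallest eigenvalue of G equals 1/(1 + P·γ_max²) where γ_max² is the largest eigenvalue of HHᵀ, and consequently every nonzero integer minimizer a* of aᵀGa satisfies ‖a*‖ ≤ √(1 + P·γ_max²). -/
/-!
G is conjugate to the diagonal matrix R by the orthogonal W, so its spectrum is the set of diagonal
entries of R, whose least element is 1/(1 + P γ_max²). The same conjugation gives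
‖x‖² / (1 + P γ_max²) ≤ xᵀGx ≤ ‖x‖², and comparing a minimiser a* with a standard basis
vector yields a*ᵀGa* ≤ 1, hence ‖a*‖² ≤ 1 + P γ_max².
-/

open Matrix BigOperators

namespace Matrix

variable {ι : Type*} [Fintype ι] [DecidableEq ι] {W : Matrix ι ι ℝ}

lemma range_eigenvalues_eq_of_eq_conj_diagonal {A : Matrix ι ι ℝ} (hA : A.IsHermitian)
    (hW : Wᵀ * W = 1) {r : ι → ℝ} (h : A = W * diagonal r * Wᵀ) :
    Set.range hA.eigenvalues = Set.range r := by
  let U : (Matrix ι ι ℝ)ˣ := ⟨W, Wᵀ, mul_eq_one_comm.mp hW, hW⟩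
  have hAU : A = (U : Matrix ι ι ℝ) * diagonal r * (↑U⁻¹ : Matrix ι ι ℝ) := h
  rw [← hA.spectrum_real_eq_range_eigenvalues, ← spectrum_diagonal, hAU,
    spectrum.units_conjugate]

lemma dotProduct_conj_diagonal_mulVec (r x : ι → ℝ) :
    x ⬝ᵥ (W * diagonal r * Wᵀ) *ᵥ x = ∑ i, r i * (Wᵀ *ᵥ x) i ^ 2 := by
  rw [← mulVec_mulVec, ← mulVec_mulVec, dotProduct_mulVec, ← mulVec_transpose]
  simp only [dotProduct, mulVec_diagonal]
  exact Finset.sum_congr rfl fun i _ => by ring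

lemma sum_transpose_mulVec_sq (hW : Wᵀ * W = 1) (x : ι → ℝ) :
    ∑ i, (Wᵀ *ᵥ x) i ^ 2 = x ⬝ᵥ x := by
  have hWWt : W * Wᵀ = 1 := mul_eq_one_comm.mp hW
  simp only [sq]
  change (Wᵀ *ᵥ x) ⬝ᵥ (Wᵀ *ᵥ x) = x ⬝ᵥ x
  rw [dotProduct_mulVec, vecMul_transpose, mulVec_mulVec, hWWt, one_mulVec]

lemma mul_dotProduct_self_le_conj_diagonal (hW : Wᵀ * W = 1) {r : ι → ℝ} {c : ℝ}
    (hc : ∀ i, c ≤ r i) (x : ι → ℝ) :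
    c * (x ⬝ᵥ x) ≤ x ⬝ᵥ (W * diagonal r * Wᵀ) *ᵥ x := by
  rw [dotProduct_conj_diagonal_mulVec, ← sum_transpose_mulVec_sq hW, Finset.mul_sum]
  exact Finset.sum_le_sum fun i _ => mul_le_mul_of_nonneg_right (hc i) (sq_nonneg _)

lemma conj_diagonal_le_mul_dotProduct_self (hW : Wᵀ * W = 1) {r : ι → ℝ} {d : ℝ}
    (hd : ∀ i, r i ≤ d) (x : ι → ℝ) :
    x ⬝ᵥ (W * diagonal r * Wᵀ) *ᵥ x ≤ d * (x ⬝ᵥ x) := by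
  rw [dotProduct_conj_diagonal_mulVec, ← sum_transpose_mulVec_sq hW, Finset.mul_sum]
  exact Finset.sum_le_sum fun i _ => mul_le_mul_of_nonneg_right (hd i) (sq_nonneg _)

lemma dotProduct_mulVec_le_diag_of_minimal_int (G : Matrix ι ι ℝ) {a : ι → ℤ}
    (hmin : ∀ b : ι → ℤ, b ≠ 0 →
      (fun i => (a i : ℝ)) ⬝ᵥ G *ᵥ (fun i => (a i : ℝ)) ≤
      (fun i => (b i : ℝ)) ⬝ᵥ G *ᵥ (fun i => (b i : ℝ))) (j : ι) :
    (fun i => (a i : ℝ)) ⬝ᵥ G *ᵥ (fun i => (a i : ℝ)) ≤ G j j := by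
  have he : (fun i => ((Pi.single j 1 : ι → ℤ) i : ℝ)) = Pi.single j 1 := by
    ext i; simp [Pi.single_apply]
  simpa [he] using hmin (Pi.single j 1) (by simp)

end Matrix

lemma one_div_one_add_mul_le_of_le {P s t : ℝ} (hP : 0 ≤ P) (hs : 0 ≤ s)
    (hst : s ≤ t) : 1 / (1 + P * t) ≤ 1 / (1 + P * s) :=
  one_div_le_one_div_of_le (by positivity) (by nlinarith)

theorem stmt14_general {n k : ℕ}
    (P : ℝ) (hP : 0 < P)
    (W : Matrix (Fin n) (Fin n) ℝ) (hW : Wᵀ * W = 1)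
    (γ : Fin n → ℝ)
    (γmax2 : ℝ)
    (hγub : ∀ i : Fin n, (i : ℕ) < k → (γ i) ^ 2 ≤ γmax2)
    (hγmem : ∃ i : Fin n, (i : ℕ) < k ∧ (γ i) ^ 2 = γmax2)
    (R : Matrix (Fin n) (Fin n) ℝ)
    (hR : R = Matrix.diagonal
      (fun i : Fin n => if (i : ℕ) < k then 1 / (1 + P * (γ i) ^ 2) else 1))
    (G : Matrix (Fin n) (Fin n) ℝ) (hG : G = W * R * Wᵀ)
    (hGH : G.IsHermitian) :
    (⨅ i, hGH.eigenvalues i) = 1 / (1 + P * γmax2) ∧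
    ∀ a : Fin n → ℤ, a ≠ 0 →
      (∀ b : Fin n → ℤ, b ≠ 0 →
        (fun i => (a i : ℝ)) ⬝ᵥ G.mulVec (fun i => (a i : ℝ)) ≤
        (fun i => (b i : ℝ)) ⬝ᵥ G.mulVec (fun i => (b i : ℝ))) →
      Real.sqrt (∑ i, ((a i : ℝ)) ^ 2) ≤ Real.sqrt (1 + P * γmax2) := by
  obtain ⟨i₀, hi₀k, hi₀⟩ := hγmem
  set r : Fin n → ℝ := fun i => if (i : ℕ) < k then 1 / (1 + P * (γ i) ^ 2) else 1
  have hγmax2 : 0 ≤ γmax2 := hi₀ ▸ sq_nonneg _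
  have hden : 0 < 1 + P * γmax2 := by positivity
  have hr_ge : ∀ i, 1 / (1 + P * γmax2) ≤ r i := fun i => by
    by_cases hi : (i : ℕ) < k
    · simpa [r, hi] using one_div_one_add_mul_le_of_le hP.le (sq_nonneg _) (hγub i hi)
    · simpa [r, hi] using one_div_one_add_mul_le_of_le hP.le le_rfl hγmax2
  have hr_le : ∀ i, r i ≤ 1 := fun i => by
    by_cases hi : (i : ℕ) < k
    · simpa [r, hi] using one_div_one_add_mul_le_of_le hP.le le_rfl (sq_nonneg (γ i))
    · simp [r, hi]
  have hGr : G = W * diagonal r * Wᵀ := hG.trans (by rw [hR])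
  refine ⟨?_, fun a _ hmin => ?_⟩
  · change sInf (Set.range hGH.eigenvalues) = _
    rw [range_eigenvalues_eq_of_eq_conj_diagonal hGH hW hGr]
    exact IsLeast.csInf_eq ⟨⟨i₀, by simp [r, hi₀k, hi₀]⟩, Set.forall_mem_range.mpr hr_ge⟩
  · set x : Fin n → ℝ := fun i => (a i : ℝ)
    have hGx : x ⬝ᵥ G *ᵥ x ≤ 1 :=
      calc x ⬝ᵥ G *ᵥ x
          ≤ G i₀ i₀ := dotProduct_mulVec_le_diag_of_minimal_int G hmin i₀
        _ = Pi.single i₀ 1 ⬝ᵥ G *ᵥ Pi.single i₀ 1 := by simp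
        _ ≤ 1 * (Pi.single i₀ 1 ⬝ᵥ Pi.single i₀ 1) :=
            hGr ▸ conj_diagonal_le_mul_dotProduct_self hW hr_le _
        _ = 1 := by simp
    have hxx : 1 / (1 + P * γmax2) * (x ⬝ᵥ x) ≤ 1 :=
      (hGr ▸ mul_dotProduct_self_le_conj_diagonal hW hr_ge x).trans hGx
    rw [div_mul_eq_mul_div, one_mul, div_le_one hden] at hxx
    exact Real.sqrt_le_sqrt (by simpa [x, dotProduct, sq] using hxx)

theorem stmt14 {n k : ℕ} [NeZero n] (hk : 1 ≤ k) (hnk : k < n)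
    (H : Matrix (Fin n) (Fin k) ℝ) (P : ℝ) (hP : 0 < P)
    (W : Matrix (Fin n) (Fin n) ℝ) (hW : Wᵀ * W = 1)
    (γ : Fin n → ℝ)
    (hHHt : H * Hᵀ =
      W * Matrix.diagonal (fun i : Fin n => if (i : ℕ) < k then (γ i) ^ 2 else 0) * Wᵀ)
    (γmax2 : ℝ)
    (hγub : ∀ i : Fin n, (i : ℕ) < k → (γ i) ^ 2 ≤ γmax2)
    (hγmem : ∃ i : Fin n, (i : ℕ) < k ∧ (γ i) ^ 2 = γmax2)
    (hγnonneg : 0 ≤ γmax2)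
    (R : Matrix (Fin n) (Fin n) ℝ)
    (hR : R = Matrix.diagonal
      (fun i : Fin n => if (i : ℕ) < k then 1 / (1 + P * (γ i) ^ 2) else 1))
    (G : Matrix (Fin n) (Fin n) ℝ) (hG : G = W * R * Wᵀ)
    (hGH : G.IsHermitian) :
    (⨅ i, hGH.eigenvalues i) = 1 / (1 + P * γmax2) ∧
    ∀ a : Fin n → ℤ, a ≠ 0 →
      (∀ b : Fin n → ℤ, b ≠ 0 →
        (fun i => (a i : ℝ)) ⬝ᵥ G.mulVec (fun i => (a i : ℝ)) ≤
        (fun i => (b i : ℝ)) ⬝ᵥ G.mulVec (fun i => (b i : ℝ))) →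
      Real.sqrt (∑ i, ((a i : ℝ)) ^ 2) ≤ Real.sqrt (1 + P * γmax2) :=
  stmt14_general P hP W hW γ γmax2 hγub hγmem R hR G hG hGH
end

section
/- Let G be symmetric positive definite, a* a nonzero integer minimizer of aᵀGa, and j an index such that a* is not supported only on {j}. Define b by b_j = round(r_j) (nearest integer to r_j := −(Σ_{i≠j} G_{ji} a*_i)/G_{jj}) and b_i = a*_i for i ≠ j. Then b ≠ 0 and bᵀGb ≤ a*ᵀGa*, hence bᵀGb = a*ᵀGa*. -/
open Matrix BigOperators

/-!
Restricted to the line through `a*` in the `j`-th coordinate direction, the quadratic form is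
`G j j * (s - r_j) ^ 2` plus a constant, so among integer values of `s` it is smallest at
`round r_j`. Since `a*` is nonzero off `j`, the new vector is nonzero, and minimality of `a*`
gives the reverse inequality.
-/

section CoordinateLine

open Finset Function

variable {ι R : Type*} [Fintype ι] [DecidableEq ι]

lemma mulVec_update_zero_apply [CommRing R] (G : Matrix ι ι R) (x : ι → R) (j : ι) :
    (G *ᵥ update x j 0) j = ∑ i ∈ univ.erase j, G j i * x i := by
  rw [mulVec, dotProduct, ← sum_erase_add _ _ (mem_univ j), update_self, mul_zero, add_zero]
  exact sum_congr rfl fun i hi => by rw [update_of_ne (ne_of_mem_erase hi)]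

lemma dotProduct_mulVec_update_of_isSymm [CommRing R] {G : Matrix ι ι R} (hG : G.IsSymm)
    (x : ι → R) (j : ι) (s : R) :
    update x j s ⬝ᵥ G *ᵥ update x j s = update x j 0 ⬝ᵥ G *ᵥ update x j 0 +
      2 * s * ∑ i ∈ univ.erase j, G j i * x i + G j j * s ^ 2 := by
  have hsplit : update x j s = update x j 0 + Pi.single j s := by
    ext i
    rcases eq_or_ne i j with rfl | hij <;> simp [update_of_ne, *]
  have hcross : update x j 0 ⬝ᵥ G *ᵥ Pi.single j s = s * (G *ᵥ update x j 0) j := by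
    rw [dotProduct_mulVec, ← mulVec_transpose, hG.eq, dotProduct_single, mul_comm]
  have hdiag : (G *ᵥ Pi.single j s) j = G j j * s := by simp [mulVec_single]
  rw [hsplit, mulVec_add, dotProduct_add, add_dotProduct, add_dotProduct, hcross,
    single_dotProduct, single_dotProduct, hdiag, ← mulVec_update_zero_apply]
  ring

lemma dotProduct_mulVec_update_le_of_abs_sub_le [Field R] [LinearOrder R] [IsStrictOrderedRing R]
    {G : Matrix ι ι R} (hG : G.IsSymm) {j : ι} (hjj : 0 < G j j) (x : ι → R) {r s t : R}
    (hr : r = -(∑ i ∈ univ.erase j, G j i * x i) / G j j) (hst : |r - s| ≤ |r - t|) :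
    update x j s ⬝ᵥ G *ᵥ update x j s ≤ update x j t ⬝ᵥ G *ᵥ update x j t := by
  have hsum : ∑ i ∈ univ.erase j, G j i * x i = -(G j j * r) := by
    rw [hr]; field_simp
  have hsq : (r - s) ^ 2 ≤ (r - t) ^ 2 := sq_le_sq.mpr hst
  rw [dotProduct_mulVec_update_of_isSymm hG x j s, dotProduct_mulVec_update_of_isSymm hG x j t,
    hsum]
  nlinarith [mul_le_mul_of_nonneg_left hsq hjj.le]

end CoordinateLine

theorem stmt19_general {n : ℕ} (G : Matrix (Fin n) (Fin n) ℝ) (hG : G.PosDef)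
    (a : Fin n → ℤ)
    (hmin : ∀ b : Fin n → ℤ, b ≠ 0 →
      (fun i => (a i : ℝ)) ⬝ᵥ G.mulVec (fun i => (a i : ℝ)) ≤
      (fun i => (b i : ℝ)) ⬝ᵥ G.mulVec (fun i => (b i : ℝ)))
    (j : Fin n) (hne : ∃ i, i ≠ j ∧ a i ≠ 0)
    (r : ℝ)
    (hr : r = -(∑ i ∈ Finset.univ.erase j, G j i * (a i : ℝ)) / G j j)
    (b : Fin n → ℤ) (hb : b = Function.update a j (round r)) :
    b ≠ 0 ∧
    (fun i => (b i : ℝ)) ⬝ᵥ G.mulVec (fun i => (b i : ℝ)) ≤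
      (fun i => (a i : ℝ)) ⬝ᵥ G.mulVec (fun i => (a i : ℝ)) ∧
    (fun i => (b i : ℝ)) ⬝ᵥ G.mulVec (fun i => (b i : ℝ)) =
      (fun i => (a i : ℝ)) ⬝ᵥ G.mulVec (fun i => (a i : ℝ)) := by
  obtain ⟨i, hij, hai⟩ := hne
  have hb0 : b ≠ 0 := fun h => hai <| by
    simpa [hb, Function.update_of_ne hij] using congrFun h i
  have hle : (fun i => (b i : ℝ)) ⬝ᵥ G.mulVec (fun i => (b i : ℝ)) ≤
      (fun i => (a i : ℝ)) ⬝ᵥ G.mulVec (fun i => (a i : ℝ)) := by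
    have hbcast : (fun i => (b i : ℝ)) = Function.update (fun i => (a i : ℝ)) j (round r) := by
      rw [hb]; exact Function.comp_update Int.cast a j (round r)
    rw [hbcast]
    conv_rhs => rw [← Function.update_eq_self j (fun i => (a i : ℝ))]
    exact dotProduct_mulVec_update_le_of_abs_sub_le (isHermitian_iff_isSymm.mp hG.isHermitian)
      hG.diag_pos _ hr (round_le r (a j))
  exact ⟨hb0, hle, le_antisymm hle (hmin b hb0)⟩

theorem stmt19 {n : ℕ} (G : Matrix (Fin n) (Fin n) ℝ) (hG : G.PosDef)
    (a : Fin n → ℤ) (ha : a ≠ 0)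
    (hmin : ∀ b : Fin n → ℤ, b ≠ 0 →
      (fun i => (a i : ℝ)) ⬝ᵥ G.mulVec (fun i => (a i : ℝ)) ≤
      (fun i => (b i : ℝ)) ⬝ᵥ G.mulVec (fun i => (b i : ℝ)))
    (j : Fin n) (hne : ∃ i, i ≠ j ∧ a i ≠ 0)
    (r : ℝ)
    (hr : r = -(∑ i ∈ Finset.univ.erase j, G j i * (a i : ℝ)) / G j j)
    (b : Fin n → ℤ) (hb : b = Function.update a j (round r)) :
    b ≠ 0 ∧
    (fun i => (b i : ℝ)) ⬝ᵥ G.mulVec (fun i => (b i : ℝ)) ≤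
      (fun i => (a i : ℝ)) ⬝ᵥ G.mulVec (fun i => (a i : ℝ)) ∧
    (fun i => (b i : ℝ)) ⬝ᵥ G.mulVec (fun i => (b i : ℝ)) =
      (fun i => (a i : ℝ)) ⬝ᵥ G.mulVec (fun i => (a i : ℝ)) :=
  stmt19_general G hG a hmin j hne r hr b hb
end
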